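/- Let 𝒜 = {A_1,…,A_K} be n×n matrices over 𝔽 (ℝ or ℂ), let h_k(Q) = Q^{-1}A_kQ, and let f_𝒜(Q) = (1/2) Σ_k ⟨h_k(Q), J ∘ h_k(Q)⟩_ℝ on the open set of invertible matrices. Then f_𝒜 is infinitely differentiable there and, for every j ≥ 1, every invertible Q, and every matrix Z, the j-th differential evaluated on the diagonal satisfies d^j f_𝒜|_Q(Z,…,Z) = (1/2) Σ_{k=1}^K Σ_{l=0}^j (j choose l) ⟨d^{j−l}h_k|_Q(Z,…,Z), J ∘ d^l h_k|_Q(Z,…,Z)⟩_ℝ, where d^m h_k|_Q(Z,…,Z) = (−1)^m m! [Q^{-1}Z, (Q^{-1}Z)^{m−1} h_k(Q)] for m ≥ 1 and d^0 h_k|_Q = h_k(Q). -/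

import Mathlib

open Matrix

attribute [local instance] Matrix.frobeniusNormedAddCommGroup Matrix.frobeniusNormedSpace

variable {𝕜 : Type*} [RCLike 𝕜] {n K : ℕ}

/-- The real Frobenius inner product `⟨X,Y⟩_ℝ = Re ∑ᵢⱼ Xᵢⱼ conj(Yᵢⱼ)`. -/
noncomputable def rinner (X Y : Matrix (Fin n) (Fin n) 𝕜) : ℝ :=
  RCLike.re (∑ i, ∑ j, X i j * (starRingEnd 𝕜) (Y i j))

/-- The off-diagonal part `J ∘ X` (Hadamard product with the matrix `J` having zeros
on the diagonal and ones elsewhere). -/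
def offd (X : Matrix (Fin n) (Fin n) 𝕜) : Matrix (Fin n) (Fin n) 𝕜 :=
  fun i j => if i = j then 0 else X i j

/-- The diagonal values of the `m`-th differential of `h_A(Q) = Q⁻¹AQ`:
`d⁰h = h_A(Q)` and `dᵐh(Z,…,Z) = (−1)^m m! [Q⁻¹Z, (Q⁻¹Z)^{m−1} h_A(Q)]` for `m ≥ 1`. -/
noncomputable def dh (A Q Z : Matrix (Fin n) (Fin n) 𝕜) (m : ℕ) :
    Matrix (Fin n) (Fin n) 𝕜 :=
  if m = 0 then Q⁻¹ * A * Q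
  else ((-1 : ℝ) ^ m * (m).factorial) •
    ((Q⁻¹ * Z) * ((Q⁻¹ * Z) ^ (m - 1) * (Q⁻¹ * A * Q)) -
      ((Q⁻¹ * Z) ^ (m - 1) * (Q⁻¹ * A * Q)) * (Q⁻¹ * Z))

/-- The cost functional `f_𝒜(Q) = (1/2) ∑ₖ ⟨h_k(Q), J ∘ h_k(Q)⟩_ℝ`. -/
noncomputable def costF (A : Fin K → Matrix (Fin n) (Fin n) 𝕜)
    (Q : Matrix (Fin n) (Fin n) 𝕜) : ℝ :=
  (1 / 2) * ∑ k, rinner (Q⁻¹ * A k * Q) (offd (Q⁻¹ * A k * Q))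

section Aux

attribute [local instance] Matrix.frobeniusNormedRing Matrix.frobeniusNormedAlgebra

namespace CostFAux

/- Shift lemmas for `fderiv` and `iteratedFDeriv`. -/
section Shift

variable {E F : Type*} [NormedAddCommGroup E] [NormedSpace ℝ E]
  [NormedAddCommGroup F] [NormedSpace ℝ F]

lemma diffAt_shift {g : E → F} {a x : E} (h : DifferentiableAt ℝ (fun y => g (a + y)) x) :
    DifferentiableAt ℝ g (a + x) := by
  have h2 : DifferentiableAt ℝ (fun z : E => z - a) (a + x) :=
    differentiable_id.sub_const a |>.differentiableAt
  have h' : DifferentiableAt ℝ (fun y => g (a + y)) (a + x - a) := by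
    simpa [add_sub_cancel_left] using h
  have := h'.comp (a + x) h2
  have he : (fun z : E => g (a + (z - a))) = g := by
    funext z; congr 1; abel
  simpa only [Function.comp_def, he] using this

lemma fderiv_shift (g : E → F) (a x : E) :
    fderiv ℝ (fun y => g (a + y)) x = fderiv ℝ g (a + x) := by
  by_cases h : DifferentiableAt ℝ g (a + x)
  · have hs : HasFDerivAt (fun y : E => a + y) (ContinuousLinearMap.id ℝ E) x := by
      simpa using (hasFDerivAt_id x).const_add a
    have := (h.hasFDerivAt.comp x hs).fderiv
    simpa [Function.comp_def] using this
  · rw [fderiv_zero_of_not_differentiableAt h, fderiv_zero_of_not_differentiableAt]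
    exact fun hc => h (diffAt_shift hc)

lemma iteratedFDeriv_shift (g : E → F) (a : E) (i : ℕ) (x : E) :
    iteratedFDeriv ℝ i (fun y => g (a + y)) x = iteratedFDeriv ℝ i g (a + x) := by
  induction i generalizing x with
  | zero => ext m; simp
  | succ i IH =>
    have h1 : (iteratedFDeriv ℝ i fun y => g (a + y)) =
        fun y => iteratedFDeriv ℝ i g (a + y) := funext fun y => IH y
    rw [iteratedFDeriv_succ_eq_comp_left, iteratedFDeriv_succ_eq_comp_left]
    simp only [Function.comp_apply, h1]
    rw [fderiv_shift (iteratedFDeriv ℝ i g) a x]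

end Shift

/- Generic line lemma. -/
section Line

variable {E : Type*} [NormedAddCommGroup E] [NormedSpace ℝ E]

lemma iteratedDeriv_line {f : E → ℝ} {s : Set E} (hs : IsOpen s)
    (hf : ContDiffOn ℝ (⊤ : ℕ∞) f s) {Q : E} (hQ : Q ∈ s) (Z : E) (j : ℕ) :
    iteratedDeriv j (fun t : ℝ => f (Q + t • Z)) 0 = iteratedFDeriv ℝ j f Q (fun _ => Z) := by
  set f' : E → ℝ := fun Y => f (Q + Y) with hf'def
  set s' : Set E := (fun Y => Q + Y) ⁻¹' s with hs'def
  have hs' : IsOpen s' := hs.preimage (continuous_const.add continuous_id)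
  have h0 : (0 : E) ∈ s' := by simp [hs'def, hQ]
  have hf' : ContDiffOn ℝ (⊤ : ℕ∞) f' s' := by
    refine hf.comp ((contDiff_const.add contDiff_id).contDiffOn) ?_
    exact fun y hy => hy
  set L : ℝ →L[ℝ] E := ContinuousLinearMap.toSpanSingleton ℝ Z with hLdef
  have hL0 : L 0 ∈ s' := by simp [hLdef, ContinuousLinearMap.toSpanSingleton_apply, h0]
  have key := L.iteratedFDerivWithin_comp_right hf' hs'.uniqueDiffOn
    ((hs'.preimage L.continuous).uniqueDiffOn) hL0 (i := j) (by exact_mod_cast le_top)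
  have h0' : (0 : ℝ) ∈ L ⁻¹' s' := by
    simpa [Set.mem_preimage] using hL0
  rw [iteratedFDerivWithin_of_isOpen j (hs'.preimage L.continuous) h0'] at key
  have hL0' : L 0 = 0 := by simp
  rw [hL0', iteratedFDerivWithin_of_isOpen j hs' h0] at key
  have happ := congrArg (fun (P : ContinuousMultilinearMap ℝ (fun _ : Fin j => ℝ) ℝ) =>
    P (fun _ => (1 : ℝ))) key
  simp only [ContinuousMultilinearMap.compContinuousLinearMap_apply] at happ
  have hgL : (f' ∘ L) = fun t : ℝ => f (Q + t • Z) := by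
    funext t; simp [hf'def, hLdef, ContinuousLinearMap.toSpanSingleton_apply]
  have hL1 : L 1 = Z := by simp [hLdef, ContinuousLinearMap.toSpanSingleton_apply]
  rw [hgL, hL1] at happ
  rw [iteratedDeriv_eq_iteratedFDeriv, happ, iteratedFDeriv_shift f Q j 0, add_zero]

end Line


section MatrixPart

noncomputable instance : CompleteSpace (Matrix (Fin n) (Fin n) 𝕜) :=
  FiniteDimensional.complete ℝ _

/-- Entry evaluation as a continuous `ℝ`-linear map. -/
noncomputable def entryCLM (i j : Fin n) : Matrix (Fin n) (Fin n) 𝕜 →L[ℝ] 𝕜 :=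
  LinearMap.toContinuousLinearMap
    { toFun := fun X => X i j
      map_add' := fun _ _ => rfl
      map_smul' := fun _ _ => rfl }

@[simp] lemma entryCLM_apply (i j : Fin n) (X : Matrix (Fin n) (Fin n) 𝕜) :
    entryCLM i j X = X i j := rfl

lemma rinner_offd (X Y : Matrix (Fin n) (Fin n) 𝕜) :
    rinner X (offd Y) =
      ∑ i, ∑ j, if i = j then 0 else RCLike.re (X i j * (starRingEnd 𝕜) (Y i j)) := by
  rw [rinner, map_sum]
  refine Finset.sum_congr rfl fun i _ => ?_
  rw [map_sum]
  exact Finset.sum_congr rfl fun j _ => by by_cases h : i = j <;> simp [offd, h]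

lemma hasDerivAt_entry {x : ℝ → Matrix (Fin n) (Fin n) 𝕜} {x' : Matrix (Fin n) (Fin n) 𝕜}
    {t : ℝ} (i j : Fin n) (hx : HasDerivAt x x' t) :
    HasDerivAt (fun s => x s i j) (x' i j) t := by
  exact (entryCLM i j).hasFDerivAt.comp_hasDerivAt t hx

lemma hasDerivAt_conj' {y : ℝ → 𝕜} {y' : 𝕜} {t : ℝ} (hy : HasDerivAt y y' t) :
    HasDerivAt (fun s => (starRingEnd 𝕜) (y s)) ((starRingEnd 𝕜) y') t := by
  have := (RCLike.conjCLE (K := 𝕜)).toContinuousLinearMap.hasFDerivAt.comp_hasDerivAt t hy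
  simpa [RCLike.conjCLE_apply, Function.comp_def] using this

lemma hasDerivAt_re' {y : ℝ → 𝕜} {y' : 𝕜} {t : ℝ} (hy : HasDerivAt y y' t) :
    HasDerivAt (fun s => RCLike.re (y s)) (RCLike.re y') t := by
  simpa [Function.comp_def] using (RCLike.reCLM (K := 𝕜)).hasFDerivAt.comp_hasDerivAt t hy

lemma hasDerivAt_rinner_offd {x y : ℝ → Matrix (Fin n) (Fin n) 𝕜}
    {x' y' : Matrix (Fin n) (Fin n) 𝕜} {t : ℝ}
    (hx : HasDerivAt x x' t) (hy : HasDerivAt y y' t) :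
    HasDerivAt (fun s => rinner (x s) (offd (y s)))
      (rinner x' (offd (y t)) + rinner (x t) (offd y')) t := by
  simp only [rinner_offd, ← Finset.sum_add_distrib]
  refine HasDerivAt.fun_sum fun i _ => HasDerivAt.fun_sum fun j _ => ?_
  by_cases h : i = j
  · simpa [h] using hasDerivAt_const t (0 : ℝ)
  · simp only [if_neg h]
    have := hasDerivAt_re' ((hasDerivAt_entry i j hx).mul (hasDerivAt_conj' (hasDerivAt_entry i j hy)))
    simpa [map_add] using this

lemma contDiffOn_inv_matrix :
    ContDiffOn ℝ (⊤ : ℕ∞) (fun Q : Matrix (Fin n) (Fin n) 𝕜 => Q⁻¹)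
      {Q : Matrix (Fin n) (Fin n) 𝕜 | IsUnit Q} := by
  intro Q hQ
  have h : (fun Q : Matrix (Fin n) (Fin n) 𝕜 => Q⁻¹) = Ring.inverse := by
    funext R; rw [Matrix.nonsing_inv_eq_ringInverse]
  rw [h]
  exact (contDiffAt_ringInverse ℝ hQ.unit).contDiffWithinAt

lemma contDiff_rinner_offd_self :
    ContDiff ℝ (⊤ : ℕ∞) (fun X : Matrix (Fin n) (Fin n) 𝕜 => rinner X (offd X)) := by
  have heq : (fun X : Matrix (Fin n) (Fin n) 𝕜 => rinner X (offd X)) =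
      fun X => ∑ i, ∑ j, if i = j then 0 else RCLike.re (X i j * (starRingEnd 𝕜) (X i j)) := by
    funext X; rw [rinner_offd]
  rw [heq]
  refine ContDiff.sum fun i _ => ContDiff.sum fun j _ => ?_
  by_cases h : i = j
  · simpa [h] using contDiff_const
  · simp only [if_neg h]
    have h1 : ContDiff ℝ (⊤ : ℕ∞) (fun X : Matrix (Fin n) (Fin n) 𝕜 => X i j) :=
      by have := (entryCLM (𝕜 := 𝕜) i j).contDiff (n := (⊤ : ℕ∞)); exact this
    have h2 : ContDiff ℝ (⊤ : ℕ∞) (fun X : Matrix (Fin n) (Fin n) 𝕜 => (starRingEnd 𝕜) (X i j)) := by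
      have := (RCLike.conjCLE (K := 𝕜)).toContinuousLinearMap.contDiff.comp h1
      simpa [RCLike.conjCLE_apply, Function.comp_def] using this
    exact (RCLike.reCLM (K := 𝕜)).contDiff.comp (h1.mul h2)

lemma contDiffOn_costF (A : Fin K → Matrix (Fin n) (Fin n) 𝕜) :
    ContDiffOn ℝ (⊤ : ℕ∞) (costF A) {Q : Matrix (Fin n) (Fin n) 𝕜 | IsUnit Q} := by
  have hk : ∀ k, ContDiffOn ℝ (⊤ : ℕ∞) (fun Q : Matrix (Fin n) (Fin n) 𝕜 => Q⁻¹ * A k * Q)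
      {Q : Matrix (Fin n) (Fin n) 𝕜 | IsUnit Q} :=
    fun k => (contDiffOn_inv_matrix.mul contDiffOn_const).mul contDiffOn_id
  have : ContDiffOn ℝ (⊤ : ℕ∞) (fun Q : Matrix (Fin n) (Fin n) 𝕜 =>
      ∑ k, rinner (Q⁻¹ * A k * Q) (offd (Q⁻¹ * A k * Q)))
      {Q : Matrix (Fin n) (Fin n) 𝕜 | IsUnit Q} :=
    ContDiffOn.sum fun k _ => contDiff_rinner_offd_self.comp_contDiffOn (hk k)
  exact contDiffOn_const.mul this

/-! ### The one-parameter family along a line -/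

variable (Q Z : Matrix (Fin n) (Fin n) 𝕜)

noncomputable def psi (t : ℝ) : Matrix (Fin n) (Fin n) 𝕜 := 1 + t • (Q⁻¹ * Z)

noncomputable def uu (t : ℝ) : Matrix (Fin n) (Fin n) 𝕜 := (psi Q Z t)⁻¹

noncomputable def DD (B : Matrix (Fin n) (Fin n) 𝕜) (m : ℕ) (t : ℝ) :
    Matrix (Fin n) (Fin n) 𝕜 :=
  if m = 0 then uu Q Z t * B * psi Q Z t
  else ((-1 : ℝ) ^ m * m.factorial) •
    ((Q⁻¹ * Z) ^ m * uu Q Z t ^ (m + 1) * B * psi Q Z t -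
      (Q⁻¹ * Z) ^ (m - 1) * uu Q Z t ^ m * (B * (Q⁻¹ * Z)))

lemma continuous_psi : Continuous (psi Q Z) := by
  unfold psi
  exact continuous_const.add (continuous_id.smul continuous_const)

lemma commute_W_psi (t : ℝ) : Commute (Q⁻¹ * Z) (psi Q Z t) := by
  unfold psi
  simp only [Commute, SemiconjBy, mul_add, add_mul, mul_one, one_mul,
    mul_smul_comm, smul_mul_assoc]

lemma commute_W_uu {t : ℝ} (h : IsUnit (psi Q Z t)) :
    Commute (Q⁻¹ * Z) (uu Q Z t) := by
  obtain ⟨v, hv⟩ := h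
  have hc : Commute (Q⁻¹ * Z) (v : Matrix (Fin n) (Fin n) 𝕜) := hv ▸ commute_W_psi Q Z t
  have huv : uu Q Z t = ↑v⁻¹ := by
    rw [uu, ← hv]; exact (Matrix.coe_units_inv v).symm
  rw [huv]
  exact hc.units_inv_right

lemma hasDerivAt_psi (t : ℝ) : HasDerivAt (psi Q Z) (Q⁻¹ * Z) t := by
  unfold psi
  exact (((hasDerivAt_id t).smul_const (Q⁻¹ * Z)).const_add (1 : Matrix (Fin n) (Fin n) 𝕜)).congr_deriv (one_smul ℝ _)

lemma hasDerivAt_uu {t : ℝ} (h : IsUnit (psi Q Z t)) :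
    HasDerivAt (uu Q Z) (-((Q⁻¹ * Z) * uu Q Z t ^ 2)) t := by
  obtain ⟨v, hv⟩ := h
  have hF : HasFDerivAt Ring.inverse
      (-(ContinuousLinearMap.mulLeftRight ℝ (Matrix (Fin n) (Fin n) 𝕜) ↑v⁻¹ ↑v⁻¹))
      (psi Q Z t) := by
    rw [← hv]; exact hasFDerivAt_ringInverse v
  have h1 := hF.comp_hasDerivAt t (hasDerivAt_psi Q Z t)
  have h2 : Ring.inverse ∘ psi Q Z = uu Q Z := by
    funext s; rw [Function.comp_apply, uu, Matrix.nonsing_inv_eq_ringInverse]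
  rw [h2] at h1
  refine h1.congr_deriv (Eq.symm ?_)
  have huv : uu Q Z t = ↑v⁻¹ := by
    rw [uu, ← hv]; exact (Matrix.coe_units_inv v).symm
  have hcomm : Commute (Q⁻¹ * Z) (uu Q Z t) := commute_W_uu Q Z ⟨v, hv⟩
  rw [ContinuousLinearMap.neg_apply, ContinuousLinearMap.mulLeftRight_apply, ← huv,
    pow_two, ← mul_assoc, hcomm.eq]

lemma hasDerivAt_uupow {t : ℝ} (h : IsUnit (psi Q Z t)) (j : ℕ) :
    HasDerivAt (fun s => uu Q Z s ^ j)
      (-((j : ℝ) • ((Q⁻¹ * Z) * uu Q Z t ^ (j + 1)))) t := by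
  induction j with
  | zero => simp only [pow_zero, Nat.cast_zero, zero_smul, neg_zero]; exact hasDerivAt_const t (1 : Matrix (Fin n) (Fin n) 𝕜)
  | succ j IH =>
    have h1 := IH.mul (hasDerivAt_uu Q Z h)
    have h2 : ((fun s => uu Q Z s ^ j) * uu Q Z) = fun s => uu Q Z s ^ (j + 1) := by
      funext s; rw [Pi.mul_apply, pow_succ]
    rw [h2] at h1
    refine h1.congr_deriv (Eq.symm ?_)
    have hc : uu Q Z t ^ j * (Q⁻¹ * Z) = (Q⁻¹ * Z) * uu Q Z t ^ j :=
      ((commute_W_uu Q Z h).pow_right j).eq.symm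
    have key1 : (Q⁻¹ * Z) * uu Q Z t ^ (j + 1) * uu Q Z t
        = (Q⁻¹ * Z) * uu Q Z t ^ (j + 1 + 1) := by
      rw [mul_assoc, ← pow_succ]
    have key2 : uu Q Z t ^ j * ((Q⁻¹ * Z) * uu Q Z t ^ 2)
        = (Q⁻¹ * Z) * uu Q Z t ^ (j + 1 + 1) := by
      rw [← mul_assoc, hc, mul_assoc, ← pow_add]
    rw [neg_mul, smul_mul_assoc, key1, mul_neg, key2]
    push_cast
    module

lemma DD_step_algebra (m : ℕ) (W u B P : Matrix (Fin n) (Fin n) 𝕜) :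
    ((-1 : ℝ) ^ (m + 2) * (m + 2).factorial) •
      (W ^ (m + 2) * u ^ (m + 3) * B * P - W ^ (m + 1) * u ^ (m + 2) * (B * W))
    = ((-1 : ℝ) ^ (m + 1) * (m + 1).factorial) •
      (W ^ (m + 1) * -((((m : ℕ) + 2 : ℕ) : ℝ) • (W * u ^ (m + 3))) * B * P +
        W ^ (m + 1) * u ^ (m + 2) * B * W -
        W ^ m * -((((m : ℕ) + 1 : ℕ) : ℝ) • (W * u ^ (m + 2))) * (B * W)) := by
  have hX : W ^ (m + 1) * (W * u ^ (m + 3)) = W ^ (m + 2) * u ^ (m + 3) := by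
    rw [← mul_assoc, ← pow_succ]
  have hX' : W ^ m * (W * u ^ (m + 2)) = W ^ (m + 1) * u ^ (m + 2) := by
    rw [← mul_assoc, ← pow_succ]
  have hY : W ^ (m + 1) * u ^ (m + 2) * B * W = W ^ (m + 1) * u ^ (m + 2) * (B * W) :=
    mul_assoc _ B W
  simp only [mul_neg, neg_mul, mul_smul_comm, smul_mul_assoc]
  rw [hX, hX', hY]
  match_scalars <;> push_cast [Nat.factorial_succ] <;> ring

lemma hasDerivAt_DD (B : Matrix (Fin n) (Fin n) 𝕜) {t : ℝ} (h : IsUnit (psi Q Z t)) (m : ℕ) :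
    HasDerivAt (DD Q Z B m) (DD Q Z B (m + 1) t) t := by
  cases m with
  | zero =>
    have h1 := ((hasDerivAt_uu Q Z h).mul_const B).mul (hasDerivAt_psi Q Z t)
    have hfun : DD Q Z B 0 = fun s => uu Q Z s * B * psi Q Z s := by
      funext s; simp [DD]
    rw [hfun]
    refine h1.congr_deriv (Eq.symm ?_)
    norm_num [DD]
    simp only [neg_mul, mul_assoc, mul_neg]
    module
  | succ m =>
    have hf := (((hasDerivAt_uupow Q Z h (m + 2)).const_mul ((Q⁻¹ * Z) ^ (m + 1))).mul_const
      B).mul (hasDerivAt_psi Q Z t)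
    have hg := ((hasDerivAt_uupow Q Z h (m + 1)).const_mul ((Q⁻¹ * Z) ^ m)).mul_const
      (B * (Q⁻¹ * Z))
    have htot := (hf.sub hg).const_smul ((-1 : ℝ) ^ (m + 1) * (m + 1).factorial)
    have hfun : DD Q Z B (m + 1) = fun s => ((-1 : ℝ) ^ (m + 1) * (m + 1).factorial) •
        ((Q⁻¹ * Z) ^ (m + 1) * uu Q Z s ^ (m + 2) * B * psi Q Z s -
          (Q⁻¹ * Z) ^ m * uu Q Z s ^ (m + 1) * (B * (Q⁻¹ * Z))) := by
      funext s; simp [DD]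
    rw [hfun]
    refine htot.congr_deriv (Eq.symm ?_)
    simp only [DD, Nat.succ_ne_zero, if_false, Nat.add_sub_cancel]
    exact DD_step_algebra m (Q⁻¹ * Z) (uu Q Z t) B (psi Q Z t)

lemma pascal_sum (b : ℕ → ℕ → ℝ) (j : ℕ) :
    ∑ l ∈ Finset.range (j + 1), (j.choose l : ℝ) * (b (j - l + 1) l + b (j - l) (l + 1)) =
      ∑ l ∈ Finset.range (j + 2), ((j + 1).choose l : ℝ) * b (j + 1 - l) l := by
  have hL : ∑ l ∈ Finset.range (j + 1), (j.choose l : ℝ) * (b (j - l + 1) l + b (j - l) (l + 1))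
      = (∑ l ∈ Finset.range (j + 1), (j.choose l : ℝ) * b (j - l + 1) l)
        + ∑ l ∈ Finset.range (j + 1), (j.choose l : ℝ) * b (j - l) (l + 1) := by
    rw [← Finset.sum_add_distrib]
    exact Finset.sum_congr rfl fun l _ => by ring
  have hB : ∑ l ∈ Finset.range (j + 1), (j.choose (l + 1) : ℝ) * b (j - l) (l + 1)
      = ∑ l ∈ Finset.range j, (j.choose (l + 1) : ℝ) * b (j - l) (l + 1) := by
    rw [Finset.sum_range_succ]
    simp [Nat.choose_succ_self]
  have hA : ∑ l ∈ Finset.range (j + 1), (j.choose l : ℝ) * b (j - l + 1) l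
      = (∑ l ∈ Finset.range j, (j.choose (l + 1) : ℝ) * b (j - l) (l + 1)) + b (j + 1) 0 := by
    rw [Finset.sum_range_succ' (fun l => (j.choose l : ℝ) * b (j - l + 1) l) j]
    simp only [Nat.choose_zero_right, Nat.cast_one, one_mul, Nat.sub_zero]
    congr 1
    refine Finset.sum_congr rfl fun l hl => ?_
    have hlj : l < j := Finset.mem_range.mp hl
    rw [show j - (l + 1) + 1 = j - l from by omega]
  rw [hL, hA]
  rw [Finset.sum_range_succ' (fun l => ((j + 1).choose l : ℝ) * b (j + 1 - l) l) (j + 1)]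
  have hR : ∑ l ∈ Finset.range (j + 1), ((j + 1).choose (l + 1) : ℝ) * b (j + 1 - (l + 1)) (l + 1)
      = (∑ l ∈ Finset.range (j + 1), (j.choose l : ℝ) * b (j - l) (l + 1))
        + ∑ l ∈ Finset.range j, (j.choose (l + 1) : ℝ) * b (j - l) (l + 1) := by
    rw [← hB, ← Finset.sum_add_distrib]
    refine Finset.sum_congr rfl fun l hl => ?_
    rw [Nat.succ_sub_succ, Nat.choose_succ_succ]
    push_cast; ring
  rw [hR]
  simp only [Nat.choose_zero_right, Nat.cast_one, one_mul, Nat.sub_zero]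
  ring

noncomputable def GG (A : Fin K → Matrix (Fin n) (Fin n) 𝕜) (j : ℕ) (t : ℝ) : ℝ :=
  (1 / 2) * ∑ k, ∑ l ∈ Finset.range (j + 1), (j.choose l : ℝ) *
    rinner (DD Q Z (Q⁻¹ * A k * Q) (j - l) t) (offd (DD Q Z (Q⁻¹ * A k * Q) l t))

lemma hasDerivAt_GG (A : Fin K → Matrix (Fin n) (Fin n) 𝕜) (j : ℕ) {t : ℝ}
    (h : IsUnit (psi Q Z t)) :
    HasDerivAt (GG Q Z A j) (GG Q Z A (j + 1) t) t := by
  have hterm : ∀ k : Fin K, HasDerivAt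
      (fun s => ∑ l ∈ Finset.range (j + 1), (j.choose l : ℝ) *
        rinner (DD Q Z (Q⁻¹ * A k * Q) (j - l) s) (offd (DD Q Z (Q⁻¹ * A k * Q) l s)))
      (∑ l ∈ Finset.range (j + 1), (j.choose l : ℝ) *
        (rinner (DD Q Z (Q⁻¹ * A k * Q) (j - l + 1) t) (offd (DD Q Z (Q⁻¹ * A k * Q) l t)) +
          rinner (DD Q Z (Q⁻¹ * A k * Q) (j - l) t)
            (offd (DD Q Z (Q⁻¹ * A k * Q) (l + 1) t)))) t := by
    intro k
    refine HasDerivAt.fun_sum fun l _ => ?_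
    exact (hasDerivAt_rinner_offd (hasDerivAt_DD Q Z _ h (j - l))
      (hasDerivAt_DD Q Z _ h l)).const_mul _
  have hsum := (HasDerivAt.fun_sum fun k (_ : k ∈ Finset.univ) => hterm k).const_mul (1 / 2 : ℝ)
  have hfun : GG Q Z A j = fun s => (1 / 2 : ℝ) *
      ∑ k, ∑ l ∈ Finset.range (j + 1), (j.choose l : ℝ) *
        rinner (DD Q Z (Q⁻¹ * A k * Q) (j - l) s) (offd (DD Q Z (Q⁻¹ * A k * Q) l s)) := by
    funext s; rfl
  rw [hfun]
  refine hsum.congr_deriv (Eq.symm ?_)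
  rw [GG]
  congr 1
  refine Finset.sum_congr rfl fun k _ => ?_
  exact (pascal_sum (fun a c => rinner (DD Q Z (Q⁻¹ * A k * Q) a t)
    (offd (DD Q Z (Q⁻¹ * A k * Q) c t))) j).symm

lemma costF_line (A : Fin K → Matrix (Fin n) (Fin n) 𝕜) (hQ : IsUnit Q) (t : ℝ) :
    costF A (Q + t • Z) = GG Q Z A 0 t := by
  have hdet : IsUnit Q.det := (Matrix.isUnit_iff_isUnit_det Q).mp hQ
  have hfact : Q + t • Z = Q * psi Q Z t := by
    rw [psi, mul_add, mul_one, mul_smul_comm, ← mul_assoc, Matrix.mul_nonsing_inv Q hdet,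
      one_mul]
  rw [costF, GG]
  congr 1
  refine Finset.sum_congr rfl fun k _ => ?_
  rw [Finset.sum_range_one]
  have hDD : (Q + t • Z)⁻¹ * A k * (Q + t • Z) = DD Q Z (Q⁻¹ * A k * Q) 0 t := by
    rw [hfact, Matrix.mul_inv_rev, DD, if_pos rfl, uu]
    simp only [mul_assoc]
  rw [hDD]
  simp

lemma isOpen_U : IsOpen {s : ℝ | IsUnit (psi Q Z s)} :=
  Units.isOpen.preimage (continuous_psi Q Z)

lemma iteratedDeriv_costF_line (A : Fin K → Matrix (Fin n) (Fin n) 𝕜) (hQ : IsUnit Q) (j : ℕ) :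
    ∀ t : ℝ, IsUnit (psi Q Z t) →
      iteratedDeriv j (fun s : ℝ => costF A (Q + s • Z)) t = GG Q Z A j t := by
  induction j with
  | zero =>
    intro t _
    rw [iteratedDeriv_zero]
    exact costF_line Q Z A hQ t
  | succ j IH =>
    intro t ht
    rw [iteratedDeriv_succ]
    have hev : iteratedDeriv j (fun s : ℝ => costF A (Q + s • Z)) =ᶠ[nhds t] GG Q Z A j :=
      Filter.eventuallyEq_of_mem ((isOpen_U Q Z).mem_nhds ht) fun s hs => IH s hs
    rw [hev.deriv_eq]
    exact (hasDerivAt_GG Q Z A j ht).deriv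

lemma psi_zero : psi Q Z 0 = 1 := by simp [psi]

lemma uu_zero : uu Q Z 0 = 1 := by
  rw [uu, psi_zero, Matrix.nonsing_inv_eq_ringInverse, Ring.inverse_one]

lemma DD_zero_eq_dh (B : Matrix (Fin n) (Fin n) 𝕜) (m : ℕ) :
    DD Q Z (Q⁻¹ * B * Q) m 0 = dh B Q Z m := by
  cases m with
  | zero => simp [DD, dh, psi_zero, uu_zero]
  | succ m =>
    rw [DD, dh, if_neg (Nat.succ_ne_zero m), if_neg (Nat.succ_ne_zero m)]
    rw [psi_zero, uu_zero, Nat.add_sub_cancel]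
    simp only [one_pow, mul_one]
    rw [pow_succ' (Q⁻¹ * Z) m]
    simp only [mul_assoc]

lemma GG_zero_eq (A : Fin K → Matrix (Fin n) (Fin n) 𝕜) (j : ℕ) :
    GG Q Z A j 0 = (1 / 2) * ∑ k, ∑ l ∈ Finset.range (j + 1),
      (j.choose l : ℝ) * rinner (dh (A k) Q Z (j - l)) (offd (dh (A k) Q Z l)) := by
  rw [GG]
  congr 1
  refine Finset.sum_congr rfl fun k _ => Finset.sum_congr rfl fun l _ => ?_
  rw [DD_zero_eq_dh, DD_zero_eq_dh]

lemma main_aux (A : Fin K → Matrix (Fin n) (Fin n) 𝕜) (Q : Matrix (Fin n) (Fin n) 𝕜)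
    (hQ : IsUnit Q) (j : ℕ) (Z : Matrix (Fin n) (Fin n) 𝕜) :
    iteratedFDeriv ℝ j (costF A) Q (fun _ => Z) =
      (1 / 2) * ∑ k, ∑ l ∈ Finset.range (j + 1),
        (j.choose l : ℝ) * rinner (dh (A k) Q Z (j - l)) (offd (dh (A k) Q Z l)) := by
  have hline := iteratedDeriv_line Units.isOpen (contDiffOn_costF A) hQ Z j
  rw [← hline]
  have h0 : IsUnit (psi Q Z 0) := by rw [psi_zero]; exact isUnit_one
  rw [iteratedDeriv_costF_line Q Z A hQ j 0 h0, GG_zero_eq]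

end MatrixPart

end CostFAux

end Aux

/-- `f_𝒜` is smooth on the invertible matrices and its `j`-th
differential on the diagonal is
`(1/2) ∑ₖ ∑_{l=0}^{j} (j choose l) ⟨d^{j−l}h_k(Z), J ∘ d^l h_k(Z)⟩_ℝ`. -/
theorem iteratedFDeriv_costF (A : Fin K → Matrix (Fin n) (Fin n) 𝕜) :
    ContDiffOn ℝ (⊤ : ℕ∞) (costF A) {Q : Matrix (Fin n) (Fin n) 𝕜 | IsUnit Q} ∧
    ∀ Q : Matrix (Fin n) (Fin n) 𝕜, IsUnit Q → ∀ j : ℕ, 1 ≤ j →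
      ∀ Z : Matrix (Fin n) (Fin n) 𝕜,
        iteratedFDeriv ℝ j (costF A) Q (fun _ => Z) =
          (1 / 2) * ∑ k, ∑ l ∈ Finset.range (j + 1),
            (j.choose l : ℝ) * rinner (dh (A k) Q Z (j - l)) (offd (dh (A k) Q Z l)) := by
  constructor
  · exact CostFAux.contDiffOn_costF A
  · intro Q hQ j _ Z
    exact CostFAux.main_aux A Q hQ j Z
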